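/- Let f : [a,b] → ℝ be a bounded function. If there exists L ∈ ℝ such that for every ε > 0 there is N such that for all n ≥ N and for all choices of sample points x_k* ∈ [a + (k−1)(b−a)/n, a + k(b−a)/n], the Riemann sum Σ_{k=1}^n f(x_k*)·(b−a)/n over the regular partition of [a,b] into n equal subintervals satisfies |Σ_{k=1}^n f(x_k*)·(b−a)/n − L| < ε, then f is Riemann integrable on [a,b] with value L. In other words, restricting Riemann's definition to regular (equal-width) partitions, while allowing arbitrary sample points, does not enlarge the class of integrable bounded functions. -/

import Mathlib

open Finset Set

/-- `IsPartition a b n x` : `x 0 = a < x 1 < ... < x n = b` is a partition of `[a,b]`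
into `n` subintervals. -/
def IsPartition (a b : ℝ) (n : ℕ) (x : ℕ → ℝ) : Prop :=
  0 < n ∧ x 0 = a ∧ x n = b ∧ ∀ k < n, x k < x (k + 1)

/-- The mesh of the partition is `< δ`, i.e. every subinterval has length `< δ`. -/
def MeshLT (n : ℕ) (x : ℕ → ℝ) (δ : ℝ) : Prop :=
  ∀ k < n, x (k + 1) - x k < δ

/-- The Riemann sum of `f` w.r.t. the partition `x` with sample points `t k ∈ [x k, x (k+1)]`. -/
def RiemannSum (f : ℝ → ℝ) (n : ℕ) (x t : ℕ → ℝ) : ℝ :=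
  ∑ k ∈ Finset.range n, f (t k) * (x (k + 1) - x k)

/-- `f` is Riemann integrable on `[a,b]` with value `L`. -/
def RiemannIntegrableWith (a b : ℝ) (f : ℝ → ℝ) (L : ℝ) : Prop :=
  ∀ ε > 0, ∃ δ > 0, ∀ n : ℕ, ∀ x t : ℕ → ℝ, IsPartition a b n x → MeshLT n x δ →
    (∀ k < n, t k ∈ Set.Icc (x k) (x (k + 1))) →
    |RiemannSum f n x t - L| < ε

lemma clamp_sub {A B c d : ℝ} (hBA : B ≤ A) (hcd : c ≤ d) :
    max c (min A d) - max c (min B d) = max 0 (min A d - max B c) := by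
  rcases le_total A d with h1 | h1 <;> rcases le_total B c with h2 | h2 <;>
  rcases le_total A c with h3 | h3 <;> rcases le_total B d with h4 | h4 <;>
  simp_all [max_def, min_def] <;> linarith

/-- If the Riemann sums of a bounded function `f` over the regular partitions of `[a,b]`
(with arbitrary sample points) converge to `L`, then `f` is Riemann integrable on
`[a,b]` with value `L`: restricting to regular partitions does not enlarge the class of
integrable bounded functions. -/
theorem riemann_of_regular_partitions (a b : ℝ) (hab : a < b) (f : ℝ → ℝ)
    (hbd : ∃ M : ℝ, ∀ y ∈ Set.Icc a b, |f y| ≤ M) (L : ℝ)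
    (hreg : ∀ ε > 0, ∃ N : ℕ, ∀ n : ℕ, N ≤ n → 0 < n → ∀ t : ℕ → ℝ,
      (∀ k < n, t k ∈ Set.Icc (a + k * (b - a) / n) (a + (k + 1) * (b - a) / n)) →
      |∑ k ∈ Finset.range n, f (t k) * ((b - a) / n) - L| < ε) :
    RiemannIntegrableWith a b f L := by
  classical
  obtain ⟨M, hM⟩ := hbd
  intro ε hε
  obtain ⟨N, hN⟩ := hreg (ε/4) (by linarith)
  set n : ℕ := max N 1 with hndef
  have hn0 : 0 < n := lt_of_lt_of_le one_pos (le_max_right N 1)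
  have hnN : N ≤ n := le_max_left N 1
  have hnR : (0:ℝ) < n := by exact_mod_cast hn0
  set M' : ℝ := max M 1 with hM'def
  have hM'pos : (0:ℝ) < M' := lt_of_lt_of_le one_pos (le_max_right M 1)
  have hM' : ∀ y ∈ Set.Icc a b, |f y| ≤ M' := fun y hy => (hM y hy).trans (le_max_left M 1)
  have hn1R : (0:ℝ) < (n:ℝ) + 1 := by positivity
  refine ⟨ε / (16 * M' * ((n:ℝ) + 1)), by positivity, ?_⟩
  set δ : ℝ := ε / (16 * M' * ((n:ℝ) + 1)) with hδdef
  clear_value n M' δ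
  have hδpos : 0 < δ := by rw [hδdef]; positivity
  intro m x t hP hmesh ht
  obtain ⟨hm0, hx0, hxm, hxlt⟩ := hP
  -- the regular grid
  set p : ℕ → ℝ := fun k => a + k * (b - a) / n with hpdef
  clear_value p
  have hΔpos : 0 < (b - a) / n := by
    apply div_pos (by linarith) hnR
  have hpstep : ∀ k : ℕ, p (k+1) - p k = (b - a) / n := by
    intro k; simp only [hpdef]; push_cast; ring
  have hp0 : p 0 = a := by simp [hpdef]
  have hpn : p n = b := by
    simp only [hpdef]; field_simp; ring
  have hple : ∀ k : ℕ, p k ≤ p (k+1) := by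
    intro k
    have := hpstep k
    nlinarith [hΔpos]
  have hpmono : ∀ i j : ℕ, i ≤ j → p i ≤ p j := by
    intro i j hij
    simp only [hpdef]
    have h1 : (i:ℝ) ≤ (j:ℝ) := by exact_mod_cast hij
    have h2 : (i:ℝ) * (b - a) ≤ (j:ℝ) * (b - a) := by nlinarith
    have h3 : (i:ℝ) * (b - a) / n ≤ (j:ℝ) * (b - a) / n :=
      div_le_div_of_nonneg_right h2 hnR.le
    linarith
  -- monotonicity of x
  have hxmono : ∀ j, j ≤ m → ∀ i, i ≤ j → x i ≤ x j := by
    intro j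
    induction j with
    | zero => intro _ i hi; simp [Nat.le_zero.mp hi]
    | succ j ih =>
      intro hj i hi
      have hjm : j < m := by omega
      rcases Nat.eq_or_lt_of_le hi with h | h
      · simp [h]
      · exact le_trans (ih (by omega) i (by omega)) (le_of_lt (hxlt j hjm))
  have hxa : ∀ j, j ≤ m → a ≤ x j := by
    intro j hj; rw [← hx0]; exact hxmono j hj 0 (Nat.zero_le _)
  have hxb : ∀ j, j ≤ m → x j ≤ b := by
    intro j hj; rw [← hxm]; exact hxmono m le_rfl j hj
  -- overlap lengths
  set lam : ℕ → ℕ → ℝ := fun j k => max 0 (min (x (j+1)) (p (k+1)) - max (x j) (p k))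
    with hlamdef
  clear_value lam
  have hlam_nonneg : ∀ j k, 0 ≤ lam j k := fun j k => by
    rw [hlamdef]; exact le_max_left _ _
  have hsum1 : ∀ k, k < n → ∑ j ∈ Finset.range m, lam j k = (b - a) / n := by
    intro k hk
    have key : ∀ j ∈ Finset.range m, lam j k =
        max (p k) (min (x (j+1)) (p (k+1))) - max (p k) (min (x j) (p (k+1))) := by
      intro j hj
      have hj' := Finset.mem_range.mp hj
      rw [hlamdef]
      exact (clamp_sub (le_of_lt (hxlt j hj')) (hple k)).symm
    rw [Finset.sum_congr rfl key,
      Finset.sum_range_sub (fun j => max (p k) (min (x j) (p (k+1)))), hx0, hxm]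
    have h1 : p (k+1) ≤ b := by rw [← hpn]; exact hpmono _ _ (by omega)
    have h2 : a ≤ p k := by rw [← hp0]; exact hpmono 0 k (Nat.zero_le _)
    have h3 : p k ≤ p (k+1) := hple k
    rw [min_eq_right h1, max_eq_right h3, min_eq_left (le_trans h2 h3), max_eq_left h2]
    exact hpstep k
  have hsum2 : ∀ j, j < m → ∑ k ∈ Finset.range n, lam j k = x (j+1) - x j := by
    intro j hj
    have key : ∀ k ∈ Finset.range n, lam j k =
        max (x j) (min (p (k+1)) (x (j+1))) - max (x j) (min (p k) (x (j+1))) := by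
      intro k hk
      rw [hlamdef, clamp_sub (hple k) (le_of_lt (hxlt j hj))]
      simp only []
      rw [min_comm, max_comm (x j) (p k)]
    rw [Finset.sum_congr rfl key,
      Finset.sum_range_sub (fun k => max (x j) (min (p k) (x (j+1)))), hp0, hpn]
    have h1 : x (j+1) ≤ b := hxb (j+1) (by omega)
    have h2 : a ≤ x j := hxa j (by omega)
    have h3 : x j ≤ x (j+1) := le_of_lt (hxlt j hj)
    rw [min_eq_right h1, max_eq_right h3, min_eq_left (le_trans h2 h3), max_eq_left h2]
  -- applying the regular hypothesis
  have conv : ∀ v : ℕ → ℝ, (∀ k, k < n → v k ∈ Set.Icc (p k) (p (k+1))) →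
      |∑ k ∈ Finset.range n, f (v k) * ((b - a) / n) - L| < ε/4 := by
    intro v hv
    apply hN n hnN hn0
    intro k hk
    have h := hv k hk
    simp only [hpdef] at h
    refine ⟨h.1, ?_⟩
    have := h.2
    push_cast at this ⊢
    linarith
  -- tags in [a,b]
  have hp_mem : ∀ k, k < n → p k ∈ Set.Icc a b := by
    intro k hk
    constructor
    · rw [← hp0]; exact hpmono 0 k (Nat.zero_le _)
    · rw [← hpn]; exact hpmono k n (by omega)
  have ht_mem : ∀ j, j < m → t j ∈ Set.Icc a b := by
    intro j hj
    obtain ⟨h1, h2⟩ := ht j hj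
    exact ⟨le_trans (hxa j (by omega)) h1, le_trans h2 (hxb (j+1) (by omega))⟩
  -- choice of near-extremal tags
  have hexu : ∀ k : ℕ, ∃ u : ℝ, k < n → (u ∈ Set.Icc (p k) (p (k+1)) ∧
      ∀ j ∈ (Finset.range m).filter (fun j => p k ≤ x j ∧ x (j+1) ≤ p (k+1)),
        |f (t j) - f (p k)| ≤ |f u - f (p k)|) := by
    intro k
    by_cases hGk : ((Finset.range m).filter
        (fun j => p k ≤ x j ∧ x (j+1) ≤ p (k+1))).Nonempty
    · obtain ⟨j0, hj0, hmax⟩ := Finset.exists_max_image _ (fun j => |f (t j) - f (p k)|) hGk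
      refine ⟨t j0, fun hk => ⟨?_, hmax⟩⟩
      have hj0' := Finset.mem_filter.mp hj0
      have hj0m : j0 < m := Finset.mem_range.mp hj0'.1
      obtain ⟨h1, h2⟩ := hj0'.2
      obtain ⟨h3, h4⟩ := ht j0 hj0m
      exact ⟨le_trans h1 h3, le_trans h4 h2⟩
    · exact ⟨p k, fun hk => ⟨⟨le_rfl, hple k⟩,
        fun j hj => absurd ⟨j, hj⟩ hGk⟩⟩
  choose u hu using hexu
  set w : ℕ → ℝ := fun k => if f (p k) ≤ f (u k) then u k else p k with hwdef
  set z : ℕ → ℝ := fun k => if f (p k) ≤ f (u k) then p k else u k with hzdef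
  clear_value w z
  have hwz : ∀ k, k < n → f (w k) - f (z k) = |f (u k) - f (p k)| := by
    intro k hk
    simp only [hwdef, hzdef]
    split_ifs with h
    · rw [abs_of_nonneg (by linarith)]
    · rw [abs_of_nonpos (by linarith)]; ring
  have hw_mem : ∀ k, k < n → w k ∈ Set.Icc (p k) (p (k+1)) := by
    intro k hk
    simp only [hwdef]
    split_ifs
    · exact (hu k hk).1
    · exact ⟨le_rfl, hple k⟩
  have hz_mem : ∀ k, k < n → z k ∈ Set.Icc (p k) (p (k+1)) := by
    intro k hk
    simp only [hzdef]
    split_ifs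
    · exact ⟨le_rfl, hple k⟩
    · exact (hu k hk).1
  have hsumc : ∑ k ∈ Finset.range n, |f (u k) - f (p k)| * ((b - a) / n) < ε/2 := by
    have hw' := conv w hw_mem
    have hz' := conv z hz_mem
    have expand : ∑ k ∈ Finset.range n, |f (u k) - f (p k)| * ((b - a) / n)
        = (∑ k ∈ Finset.range n, f (w k) * ((b - a) / n))
          - (∑ k ∈ Finset.range n, f (z k) * ((b - a) / n)) := by
      rw [← Finset.sum_sub_distrib]
      refine Finset.sum_congr rfl fun k hk => ?_
      rw [← sub_mul, hwz k (Finset.mem_range.mp hk)]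
    rw [expand]
    have h1 := abs_lt.mp hw'
    have h2 := abs_lt.mp hz'
    linarith [h1.1, h1.2, h2.1, h2.2]
  have hSregL : |(∑ k ∈ Finset.range n, f (p k) * ((b - a) / n)) - L| < ε/4 :=
    conv p (fun k hk => ⟨le_rfl, hple k⟩)
  -- decompositions
  have hR : RiemannSum f m x t
      = ∑ j ∈ Finset.range m, ∑ k ∈ Finset.range n, f (t j) * lam j k := by
    unfold RiemannSum
    refine Finset.sum_congr rfl fun j hj => ?_
    rw [← Finset.mul_sum, hsum2 j (Finset.mem_range.mp hj)]
  have hS : (∑ k ∈ Finset.range n, f (p k) * ((b - a) / n))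
      = ∑ j ∈ Finset.range m, ∑ k ∈ Finset.range n, f (p k) * lam j k := by
    rw [Finset.sum_comm]
    refine Finset.sum_congr rfl fun k hk => ?_
    rw [← Finset.mul_sum, hsum1 k (Finset.mem_range.mp hk)]
  have hdiff : RiemannSum f m x t - (∑ k ∈ Finset.range n, f (p k) * ((b - a) / n))
      = ∑ j ∈ Finset.range m, ∑ k ∈ Finset.range n, (f (t j) - f (p k)) * lam j k := by
    rw [hR, hS, ← Finset.sum_sub_distrib]
    refine Finset.sum_congr rfl fun j _ => ?_
    rw [← Finset.sum_sub_distrib]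
    refine Finset.sum_congr rfl fun k _ => ?_
    ring
  have habs : |RiemannSum f m x t - (∑ k ∈ Finset.range n, f (p k) * ((b - a) / n))|
      ≤ ∑ j ∈ Finset.range m, ∑ k ∈ Finset.range n, |f (t j) - f (p k)| * lam j k := by
    rw [hdiff]
    refine (Finset.abs_sum_le_sum_abs _ _).trans ?_
    refine Finset.sum_le_sum fun j _ => ?_
    refine (Finset.abs_sum_le_sum_abs _ _).trans ?_
    refine Finset.sum_le_sum fun k _ => ?_
    rw [abs_mul, abs_of_nonneg (hlam_nonneg j k)]
  -- split into good and bad pairs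
  have hsplit : ∑ j ∈ Finset.range m, ∑ k ∈ Finset.range n, |f (t j) - f (p k)| * lam j k
      = (∑ k ∈ Finset.range n, ∑ j ∈ (Finset.range m).filter
            (fun j => p k ≤ x j ∧ x (j+1) ≤ p (k+1)), |f (t j) - f (p k)| * lam j k)
        + (∑ k ∈ Finset.range n, ∑ j ∈ (Finset.range m).filter
            (fun j => ¬(p k ≤ x j ∧ x (j+1) ≤ p (k+1))), |f (t j) - f (p k)| * lam j k) := by
    rw [Finset.sum_comm, ← Finset.sum_add_distrib]
    exact Finset.sum_congr rfl fun k _ =>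
      (Finset.sum_filter_add_sum_filter_not _ _ _).symm
  -- good estimate
  have hgood : (∑ k ∈ Finset.range n, ∑ j ∈ (Finset.range m).filter
        (fun j => p k ≤ x j ∧ x (j+1) ≤ p (k+1)), |f (t j) - f (p k)| * lam j k)
      ≤ ∑ k ∈ Finset.range n, |f (u k) - f (p k)| * ((b - a) / n) := by
    refine Finset.sum_le_sum fun k hk => ?_
    have hk' := Finset.mem_range.mp hk
    calc ∑ j ∈ (Finset.range m).filter (fun j => p k ≤ x j ∧ x (j+1) ≤ p (k+1)),
          |f (t j) - f (p k)| * lam j k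
        ≤ ∑ j ∈ (Finset.range m).filter (fun j => p k ≤ x j ∧ x (j+1) ≤ p (k+1)),
          |f (u k) - f (p k)| * lam j k :=
          Finset.sum_le_sum fun j hj =>
            mul_le_mul_of_nonneg_right ((hu k hk').2 j hj) (hlam_nonneg j k)
      _ = |f (u k) - f (p k)| * ∑ j ∈ (Finset.range m).filter
            (fun j => p k ≤ x j ∧ x (j+1) ≤ p (k+1)), lam j k := by
          rw [Finset.mul_sum]
      _ ≤ |f (u k) - f (p k)| * ((b - a) / n) := by
          refine mul_le_mul_of_nonneg_left ?_ (abs_nonneg _)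
          calc ∑ j ∈ (Finset.range m).filter
                (fun j => p k ≤ x j ∧ x (j+1) ≤ p (k+1)), lam j k
              ≤ ∑ j ∈ Finset.range m, lam j k :=
                Finset.sum_le_sum_of_subset_of_nonneg (Finset.filter_subset _ _)
                  (fun j hj _ => hlam_nonneg j k)
            _ = (b - a) / n := hsum1 k hk'
  -- straddling lemma
  have hstr : ∀ j, j < m → ∀ k, k < n → ¬(p k ≤ x j ∧ x (j+1) ≤ p (k+1)) →
      lam j k ≠ 0 → ∃ i, i < n + 1 ∧ x j < p i ∧ p i < x (j+1) := by
    intro j hj k hk hbad h0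
    have hpos : max (x j) (p k) < min (x (j+1)) (p (k+1)) := by
      by_contra hle
      push_neg at hle
      refine h0 ?_
      rw [hlamdef]
      exact max_eq_left (by linarith)
    push_neg at hbad
    rcases le_or_gt (p k) (x j) with h | h
    · have h2 := hbad h
      refine ⟨k+1, by omega, ?_, h2⟩
      calc x j ≤ max (x j) (p k) := le_max_left _ _
        _ < min (x (j+1)) (p (k+1)) := hpos
        _ ≤ p (k+1) := min_le_right _ _
    · refine ⟨k, by omega, h, ?_⟩
      calc p k ≤ max (x j) (p k) := le_max_right _ _
        _ < min (x (j+1)) (p (k+1)) := hpos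
        _ ≤ x (j+1) := min_le_left _ _
  -- straddling intervals are few
  have hcardS : ((Finset.range m).filter
      (fun j => ∃ i, i < n + 1 ∧ x j < p i ∧ p i < x (j+1))).card ≤ n + 1 := by
    set S := (Finset.range m).filter
      (fun j => ∃ i, i < n + 1 ∧ x j < p i ∧ p i < x (j+1)) with hSdef
    set φ : ℕ → ℕ := fun j =>
      if h : ∃ i, i < n + 1 ∧ x j < p i ∧ p i < x (j+1) then h.choose else 0 with hφdef
    have hφ : ∀ j ∈ S, φ j < n + 1 ∧ x j < p (φ j) ∧ p (φ j) < x (j+1) := by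
      intro j hj
      have h := (Finset.mem_filter.mp hj).2
      simp only [hφdef, dif_pos h]
      exact h.choose_spec
    have key : ∀ j1 ∈ S, ∀ j2 ∈ S, j1 < j2 → φ j1 ≠ φ j2 := by
      intro j1 h1 j2 h2 hlt heq
      have ha := hφ j1 h1
      have hb := hφ j2 h2
      have hj2m : j2 < m := Finset.mem_range.mp (Finset.mem_filter.mp h2).1
      have hx12 : x (j1+1) ≤ x j2 := hxmono j2 (by omega) (j1+1) (by omega)
      rw [heq] at ha
      linarith [ha.2.2, hb.2.1]
    have hinj : Set.InjOn φ S := by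
      intro j1 h1 j2 h2 heq
      by_contra hne
      rcases lt_or_gt_of_ne hne with h | h
      · exact key j1 h1 j2 h2 h heq
      · exact key j2 h2 j1 h1 h heq.symm
    have := Finset.card_le_card_of_injOn φ
      (fun j hj => Finset.mem_range.mpr (hφ j hj).1) hinj
    simpa using this
  -- bad estimate
  have hbadsum : (∑ k ∈ Finset.range n, ∑ j ∈ (Finset.range m).filter
        (fun j => ¬(p k ≤ x j ∧ x (j+1) ≤ p (k+1))), |f (t j) - f (p k)| * lam j k)
      ≤ 2 * M' * (((n:ℝ) + 1) * δ) := by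
    have step1 : (∑ k ∈ Finset.range n, ∑ j ∈ (Finset.range m).filter
          (fun j => ¬(p k ≤ x j ∧ x (j+1) ≤ p (k+1))), |f (t j) - f (p k)| * lam j k)
        ≤ ∑ k ∈ Finset.range n, ∑ j ∈ (Finset.range m).filter
          (fun j => ¬(p k ≤ x j ∧ x (j+1) ≤ p (k+1))), 2 * M' * lam j k := by
      refine Finset.sum_le_sum fun k hk => Finset.sum_le_sum fun j hj => ?_
      have hk' := Finset.mem_range.mp hk
      have hj' := Finset.mem_range.mp (Finset.mem_filter.mp hj).1
      refine mul_le_mul_of_nonneg_right ?_ (hlam_nonneg j k)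
      have h1 := hM' (t j) (ht_mem j hj')
      have h2 := hM' (p k) (hp_mem k hk')
      calc |f (t j) - f (p k)| ≤ |f (t j)| + |f (p k)| := abs_sub _ _
        _ ≤ 2 * M' := by linarith
    refine step1.trans ?_
    have step2 : (∑ k ∈ Finset.range n, ∑ j ∈ (Finset.range m).filter
          (fun j => ¬(p k ≤ x j ∧ x (j+1) ≤ p (k+1))), 2 * M' * lam j k)
        = 2 * M' * ∑ j ∈ Finset.range m, ∑ k ∈ Finset.range n,
            (if ¬(p k ≤ x j ∧ x (j+1) ≤ p (k+1)) then lam j k else 0) := by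
      calc (∑ k ∈ Finset.range n, ∑ j ∈ (Finset.range m).filter
            (fun j => ¬(p k ≤ x j ∧ x (j+1) ≤ p (k+1))), 2 * M' * lam j k)
          = ∑ k ∈ Finset.range n, ∑ j ∈ Finset.range m,
              (if ¬(p k ≤ x j ∧ x (j+1) ≤ p (k+1)) then 2 * M' * lam j k else 0) := by
            exact Finset.sum_congr rfl fun k _ => Finset.sum_filter _ _
        _ = ∑ j ∈ Finset.range m, ∑ k ∈ Finset.range n,
              (if ¬(p k ≤ x j ∧ x (j+1) ≤ p (k+1)) then 2 * M' * lam j k else 0) :=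
            Finset.sum_comm
        _ = 2 * M' * ∑ j ∈ Finset.range m, ∑ k ∈ Finset.range n,
              (if ¬(p k ≤ x j ∧ x (j+1) ≤ p (k+1)) then lam j k else 0) := by
            rw [Finset.mul_sum]
            refine Finset.sum_congr rfl fun j _ => ?_
            rw [Finset.mul_sum]
            refine Finset.sum_congr rfl fun k _ => ?_
            split_ifs <;> ring
    rw [step2]
    have hBj : ∀ j ∈ Finset.range m,
        (∑ k ∈ Finset.range n, (if ¬(p k ≤ x j ∧ x (j+1) ≤ p (k+1)) then lam j k else 0))
        ≤ (if (∃ i, i < n + 1 ∧ x j < p i ∧ p i < x (j+1)) then δ else 0) := by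
      intro j hj
      have hjm := Finset.mem_range.mp hj
      split_ifs with hSj
      · calc (∑ k ∈ Finset.range n,
              (if ¬(p k ≤ x j ∧ x (j+1) ≤ p (k+1)) then lam j k else 0))
            ≤ ∑ k ∈ Finset.range n, lam j k := by
              refine Finset.sum_le_sum fun k _ => ?_
              by_cases hc : ¬(p k ≤ x j ∧ x (j+1) ≤ p (k+1))
              · rw [if_pos hc]
              · rw [if_neg hc]
                exact hlam_nonneg j k
          _ = x (j+1) - x j := hsum2 j hjm
          _ ≤ δ := le_of_lt (hmesh j hjm)
      · refine le_of_eq (Finset.sum_eq_zero fun k hk => ?_)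
        by_cases hb : p k ≤ x j ∧ x (j+1) ≤ p (k+1)
        · rw [if_neg (not_not_intro hb)]
        · rw [if_pos hb]
          by_contra h0
          exact hSj (hstr j hjm k (Finset.mem_range.mp hk) hb h0)
    have hBsum : (∑ j ∈ Finset.range m, ∑ k ∈ Finset.range n,
          (if ¬(p k ≤ x j ∧ x (j+1) ≤ p (k+1)) then lam j k else 0))
        ≤ ((n:ℝ) + 1) * δ := by
      calc (∑ j ∈ Finset.range m, ∑ k ∈ Finset.range n,
            (if ¬(p k ≤ x j ∧ x (j+1) ≤ p (k+1)) then lam j k else 0))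
          ≤ ∑ j ∈ Finset.range m,
              (if (∃ i, i < n + 1 ∧ x j < p i ∧ p i < x (j+1)) then δ else 0) :=
            Finset.sum_le_sum hBj
        _ = ∑ j ∈ (Finset.range m).filter
              (fun j => ∃ i, i < n + 1 ∧ x j < p i ∧ p i < x (j+1)), δ :=
            (Finset.sum_filter _ _).symm
        _ = (((Finset.range m).filter
              (fun j => ∃ i, i < n + 1 ∧ x j < p i ∧ p i < x (j+1))).card : ℝ) * δ := by
            rw [Finset.sum_const, nsmul_eq_mul]
        _ ≤ ((n:ℝ) + 1) * δ := by
            refine mul_le_mul_of_nonneg_right ?_ (le_of_lt hδpos)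
            exact_mod_cast hcardS
    nlinarith [hBsum, hM'pos]
  -- final assembly
  have hδeq : 2 * M' * (((n:ℝ) + 1) * δ) = ε / 8 := by
    rw [hδdef]
    field_simp
    ring
  have hfin1 : |RiemannSum f m x t - (∑ k ∈ Finset.range n, f (p k) * ((b - a) / n))|
      < ε/2 + ε/8 := by
    refine lt_of_le_of_lt habs ?_
    rw [hsplit]
    linarith [hgood, hbadsum, hsumc, hδeq]
  have key : RiemannSum f m x t - L
      = (RiemannSum f m x t - (∑ k ∈ Finset.range n, f (p k) * ((b - a) / n)))
        + ((∑ k ∈ Finset.range n, f (p k) * ((b - a) / n)) - L) := by ring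
  calc |RiemannSum f m x t - L|
      ≤ |RiemannSum f m x t - (∑ k ∈ Finset.range n, f (p k) * ((b - a) / n))|
        + |(∑ k ∈ Finset.range n, f (p k) * ((b - a) / n)) - L| := by
        rw [key]; exact abs_add_le _ _
    _ < (ε/2 + ε/8) + ε/4 := add_lt_add hfin1 hSregL
    _ ≤ ε := by linarith
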